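/- Let A ∈ ℝ^{n×n}, and let B = (A + Aᵀ)/2 and C = (A − Aᵀ)/2 be the symmetric and skew-symmetric parts of A. Let B = U·H be a polar decomposition of B, with U orthogonal and H positive semidefinite. Then X_F = (B + H)/2 is the unique nearest positive semidefinite matrix to A in the Frobenius norm, i.e. X_F is symmetric positive semidefinite, ‖A − X_F‖_F ≤ ‖A − X‖_F for every symmetric positive semidefinite X, with equality only for X = X_F; moreover the squared Frobenius distance from A to the positive semidefinite cone equals ρ²_F(A) = Σ_{i : σ_i(B) < 0} σ_i(B)² + ‖C‖²_F, where σ_1(B),…,σ_n(B) are the eigenvalues of B. -/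

import Mathlib

/-!
Since `A - X = (B - X) + C` with `B - X` symmetric and `C` skew-symmetric, and these two are
orthogonal for the trace inner product, only `‖B - X‖_F` depends on `X`. From `B = U H` we get
`H² = Hᵀ Uᵀ U H = Bᵀ B = B²`, so `H` is the positive square root `|B|` and
`X_F = (B + |B|)/2 = B⁺`. Write `B = Q D Qᵀ` with `Q` orthogonal and `D = diag d`, and put
`Y = Qᵀ X Q`, which is positive semidefinite. Since `d = d⁺ - d⁻` with `d⁺ d⁻ = 0`,
`‖D - Y‖² = ‖D⁺ - Y‖² + Σ (d⁻ᵢ² + 2 d⁻ᵢ Yᵢᵢ) ≥ ‖D - D⁺‖² + ‖D⁺ - Y‖²`.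
This Pythagorean inequality gives both minimality and uniqueness.
-/

open Matrix

/-- Squared Frobenius norm of a real matrix. -/
noncomputable def frobSq {n : ℕ} (M : Matrix (Fin n) (Fin n) ℝ) : ℝ :=
  ∑ a, ∑ b, (M a b) ^ 2

/-- The Frobenius norm of a real matrix. -/
noncomputable def frobNorm {n : ℕ} (M : Matrix (Fin n) (Fin n) ℝ) : ℝ :=
  Real.sqrt (frobSq M)

lemma Real.posPart_mul_negPart (a : ℝ) : a⁺ * a⁻ = 0 := by
  rcases le_total a 0 with h | h
  · rw [posPart_eq_zero.mpr h, zero_mul]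
  · rw [negPart_eq_zero.mpr h, mul_zero]

lemma Real.negPart_sq_eq_ite (a : ℝ) : a⁻ ^ 2 = if a < 0 then a ^ 2 else 0 := by
  split_ifs with h
  · rw [negPart_eq_neg.mpr h.le, neg_sq]
  · rw [negPart_eq_zero.mpr (not_lt.mp h), sq, zero_mul]

section Orthogonal

variable {ι : Type*} [Fintype ι] [DecidableEq ι] {Q : Matrix ι ι ℝ}

lemma Matrix.IsHermitian.exists_eq_mul_diagonal_eigenvalues_mul_transpose {B : Matrix ι ι ℝ}
    (hB : B.IsHermitian) :
    ∃ Q : Matrix ι ι ℝ, Qᵀ * Q = 1 ∧ B = Q * diagonal hB.eigenvalues * Qᵀ := by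
  refine ⟨hB.eigenvectorUnitary, ?_, ?_⟩
  · rw [← conjTranspose_eq_transpose_of_trivial, ← star_eq_conjTranspose]
    exact Unitary.coe_star_mul_self hB.eigenvectorUnitary
  · rw [← conjTranspose_eq_transpose_of_trivial, ← star_eq_conjTranspose]
    exact hB.spectral_theorem

lemma mul_diagonal_mul_transpose_mul (hQ : Qᵀ * Q = 1) (a b : ι → ℝ) :
    Q * diagonal a * Qᵀ * (Q * diagonal b * Qᵀ) = Q * diagonal (a * b) * Qᵀ := by
  calc Q * diagonal a * Qᵀ * (Q * diagonal b * Qᵀ)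
      = Q * diagonal a * (Qᵀ * Q) * diagonal b * Qᵀ := by simp only [Matrix.mul_assoc]
    _ = Q * diagonal (a * b) * Qᵀ := by
      rw [hQ, Matrix.mul_one, Matrix.mul_assoc Q, diagonal_mul_diagonal]
      rfl

lemma posSemidef_mul_diagonal_mul_transpose {a : ι → ℝ} (ha : 0 ≤ a) :
    (Q * diagonal a * Qᵀ).PosSemidef := by
  simpa [conjTranspose_eq_transpose_of_trivial] using
    (PosSemidef.diagonal ha).mul_mul_conjTranspose_same Q

open scoped MatrixOrder in
lemma eq_mul_diagonal_abs_mul_transpose_of_polar {B U H : Matrix ι ι ℝ} {d : ι → ℝ}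
    (hU : Uᵀ * U = 1) (hH : H.PosSemidef) (hpolar : B = U * H) (hQ : Qᵀ * Q = 1)
    (hB : B = Q * diagonal d * Qᵀ) : H = Q * diagonal |d| * Qᵀ := by
  have hBt : Bᵀ = B := by
    rw [hB, transpose_mul, transpose_mul, transpose_transpose, diagonal_transpose,
      Matrix.mul_assoc]
  have hHH : H * H = B * B := by
    calc H * H = Hᵀ * (Uᵀ * U) * H := by
          rw [hU, Matrix.mul_one, (isHermitian_iff_isSymm.mp hH.isHermitian).eq]
      _ = Bᵀ * B := by rw [hpolar, transpose_mul]; simp only [Matrix.mul_assoc]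
      _ = B * B := by rw [hBt]
  have habs : |d| * |d| = d * d := funext fun i => abs_mul_abs_self (d i)
  refine (CFC.mul_self_eq_mul_self_iff H _ hH.nonneg
    (posSemidef_mul_diagonal_mul_transpose (abs_nonneg d)).nonneg).mp ?_
  rw [hHH, mul_diagonal_mul_transpose_mul hQ, habs, hB, mul_diagonal_mul_transpose_mul hQ]

lemma half_smul_mul_diagonal_add_abs (Q : Matrix ι ι ℝ) (d : ι → ℝ) :
    (1 / 2 : ℝ) • (Q * diagonal d * Qᵀ + Q * diagonal |d| * Qᵀ) = Q * diagonal d⁺ * Qᵀ := by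
  rw [← Matrix.add_mul, ← Matrix.mul_add, ← Matrix.smul_mul, ← Matrix.mul_smul, diagonal_add,
    ← diagonal_smul]
  congr 3
  funext i
  simp [add_abs_eq_two_nsmul_posPart]

end Orthogonal

section Frobenius

variable {n : ℕ}

lemma frobSq_nonneg (M : Matrix (Fin n) (Fin n) ℝ) : 0 ≤ frobSq M := by
  unfold frobSq
  positivity

lemma frobSq_eq_trace (M : Matrix (Fin n) (Fin n) ℝ) : frobSq M = trace (Mᵀ * M) := by
  simp only [frobSq, trace, diag, mul_apply, transpose_apply, sq]
  exact Finset.sum_comm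

lemma frobSq_eq_zero_iff {M : Matrix (Fin n) (Fin n) ℝ} : frobSq M = 0 ↔ M = 0 := by
  rw [frobSq_eq_trace, ← conjTranspose_eq_transpose_of_trivial,
    trace_conjTranspose_mul_self_eq_zero_iff]

lemma frobNorm_le_frobNorm_iff {M N : Matrix (Fin n) (Fin n) ℝ} :
    frobNorm M ≤ frobNorm N ↔ frobSq M ≤ frobSq N :=
  Real.sqrt_le_sqrt_iff (frobSq_nonneg N)

lemma frobNorm_eq_frobNorm_iff {M N : Matrix (Fin n) (Fin n) ℝ} :
    frobNorm M = frobNorm N ↔ frobSq M = frobSq N :=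
  Real.sqrt_inj (frobSq_nonneg M) (frobSq_nonneg N)

lemma frobSq_mul_mul_transpose {Q : Matrix (Fin n) (Fin n) ℝ} (hQ : Qᵀ * Q = 1)
    (M : Matrix (Fin n) (Fin n) ℝ) : frobSq (Q * M * Qᵀ) = frobSq M := by
  rw [frobSq_eq_trace, frobSq_eq_trace]
  calc trace ((Q * M * Qᵀ)ᵀ * (Q * M * Qᵀ)) = trace (Qᵀ * Q * (Mᵀ * (Qᵀ * Q) * M)) := by
        rw [← trace_mul_cycle]
        simp only [transpose_mul, transpose_transpose, Matrix.mul_assoc]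
    _ = trace (Mᵀ * M) := by rw [hQ, Matrix.one_mul, Matrix.mul_one]

lemma frobSq_add_of_transpose_eq_neg {S K : Matrix (Fin n) (Fin n) ℝ} (hS : Sᵀ = S)
    (hK : Kᵀ = -K) : frobSq (S + K) = frobSq S + frobSq K := by
  have hSK : trace (S * K) = 0 := by
    have := trace_transpose (S * K)
    rw [transpose_mul, hS, hK, Matrix.neg_mul, trace_neg, trace_mul_comm] at this
    linarith
  rw [frobSq_eq_trace, frobSq_eq_trace, frobSq_eq_trace, transpose_add, hS, hK]
  simp only [Matrix.add_mul, Matrix.mul_add, Matrix.neg_mul, trace_add, trace_neg,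
    trace_mul_comm K S, hSK]
  ring

lemma frobSq_sub_of_transpose_eq (A : Matrix (Fin n) (Fin n) ℝ) {X : Matrix (Fin n) (Fin n) ℝ}
    (hX : Xᵀ = X) :
    frobSq (A - X) = frobSq ((1 / 2 : ℝ) • (A + Aᵀ) - X) + frobSq ((1 / 2 : ℝ) • (A - Aᵀ)) := by
  rw [← frobSq_add_of_transpose_eq_neg]
  · congr 1
    module
  · rw [transpose_sub, transpose_smul, transpose_add, transpose_transpose, hX, add_comm Aᵀ]
  · rw [transpose_smul, transpose_sub, transpose_transpose, ← smul_neg, neg_sub]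

lemma frobSq_add_diagonal (M : Matrix (Fin n) (Fin n) ℝ) (e : Fin n → ℝ) :
    frobSq (M + diagonal e) = frobSq M + ∑ i, (2 * M i i * e i + e i ^ 2) := by
  simp only [frobSq, Matrix.add_apply, add_sq, diagonal_apply, Finset.sum_add_distrib]
  simp [mul_ite, ite_pow, add_assoc]

lemma frobSq_diagonal (e : Fin n → ℝ) : frobSq (diagonal e) = ∑ i, e i ^ 2 := by
  simpa [frobSq] using frobSq_add_diagonal 0 e

lemma diagonal_eq_diagonal_posPart_add (d : Fin n → ℝ) :
    diagonal d = diagonal d⁺ + diagonal (-d⁻) := by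
  rw [diagonal_add]
  congr 1
  funext i
  simp [← sub_eq_add_neg, posPart_sub_negPart]

lemma frobSq_diagonal_sub_diagonal_posPart (d : Fin n → ℝ) :
    frobSq (diagonal d - diagonal d⁺) = ∑ i, (d i)⁻ ^ 2 := by
  rw [diagonal_eq_diagonal_posPart_add d, add_sub_cancel_left, frobSq_diagonal]
  simp

lemma frobSq_diagonal_sub_posPart_add_le (d : Fin n → ℝ) {Y : Matrix (Fin n) (Fin n) ℝ}
    (hY : ∀ i, 0 ≤ Y i i) :
    frobSq (diagonal d - diagonal d⁺) + frobSq (diagonal d⁺ - Y) ≤ frobSq (diagonal d - Y) := by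
  have hd : diagonal d - Y = (diagonal d⁺ - Y) + diagonal (-d⁻) := by
    rw [diagonal_eq_diagonal_posPart_add d]
    abel
  rw [frobSq_diagonal_sub_diagonal_posPart, hd, frobSq_add_diagonal, add_comm]
  gcongr with i
  simp only [Matrix.sub_apply, diagonal_apply_eq, Pi.neg_apply, Pi.posPart_apply,
    Pi.negPart_apply, neg_sq]
  nlinarith [hY i, Real.posPart_mul_negPart (d i), negPart_nonneg (d i)]

lemma frobSq_sub_posPart_add_le {Q B X : Matrix (Fin n) (Fin n) ℝ} {d : Fin n → ℝ}
    (hQ : Qᵀ * Q = 1) (hB : B = Q * diagonal d * Qᵀ) (hX : X.PosSemidef) :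
    frobSq (B - Q * diagonal d⁺ * Qᵀ) + frobSq (Q * diagonal d⁺ * Qᵀ - X) ≤ frobSq (B - X) := by
  have hQ' : Q * Qᵀ = 1 := mul_eq_one_comm.mp hQ
  obtain ⟨Y, hY, rfl⟩ : ∃ Y : Matrix (Fin n) (Fin n) ℝ, Y.PosSemidef ∧ X = Q * Y * Qᵀ :=
    ⟨Qᵀ * X * Q,
      by simpa [conjTranspose_eq_transpose_of_trivial] using hX.conjTranspose_mul_mul_same Q,
      by simp only [← Matrix.mul_assoc, hQ', Matrix.one_mul]
         rw [Matrix.mul_assoc, hQ', Matrix.mul_one]⟩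
  subst hB
  simp only [← Matrix.mul_sub, ← Matrix.sub_mul, frobSq_mul_mul_transpose hQ]
  exact frobSq_diagonal_sub_posPart_add_le d fun i => hY.diag_nonneg

end Frobenius

open scoped Classical in
/-- let `A ∈ ℝ^{n×n}`, `B = (A + Aᵀ)/2`, `C = (A − Aᵀ)/2`, and let
`B = U·H` be a polar decomposition (`U` orthogonal, `H` positive semidefinite).
Then `X_F = (B + H)/2` is the unique nearest positive semidefinite matrix to `A`
in the Frobenius norm, and the squared distance from `A` to the PSD cone equals
`ρ²_F(A) = Σ_{i : σ_i(B) < 0} σ_i(B)² + ‖C‖²_F`, where `σ_i(B)` are the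
eigenvalues of (the symmetric matrix) `B`. -/
theorem nearest_psd_via_polar {n : ℕ} (A B C U H X_F : Matrix (Fin n) (Fin n) ℝ)
    (hB : B = (1 / 2 : ℝ) • (A + Aᵀ)) (hC : C = (1 / 2 : ℝ) • (A - Aᵀ))
    (hBherm : B.IsHermitian)
    (hU : Uᵀ * U = 1) (hH : H.PosSemidef) (hpolar : B = U * H)
    (hXF : X_F = (1 / 2 : ℝ) • (B + H)) :
    X_F.PosSemidef ∧
    (∀ X : Matrix (Fin n) (Fin n) ℝ, X.PosSemidef →
      frobNorm (A - X_F) ≤ frobNorm (A - X)) ∧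
    (∀ X : Matrix (Fin n) (Fin n) ℝ, X.PosSemidef →
      frobNorm (A - X_F) = frobNorm (A - X) → X = X_F) ∧
    frobSq (A - X_F)
      = (∑ i, if hBherm.eigenvalues i < 0 then (hBherm.eigenvalues i) ^ 2 else 0)
        + frobSq C := by
  obtain ⟨Q, hQ, hBQ⟩ := hBherm.exists_eq_mul_diagonal_eigenvalues_mul_transpose
  generalize hBherm.eigenvalues = d at hBQ ⊢
  have hHQ := eq_mul_diagonal_abs_mul_transpose_of_polar hU hH hpolar hQ hBQ
  have hXFQ : X_F = Q * diagonal d⁺ * Qᵀ := by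
    rw [hXF, hHQ, hBQ, half_smul_mul_diagonal_add_abs]
  have hXFpsd : X_F.PosSemidef := hXFQ ▸ posSemidef_mul_diagonal_mul_transpose (posPart_nonneg d)
  have hsplit : ∀ X : Matrix (Fin n) (Fin n) ℝ, X.PosSemidef →
      frobSq (A - X) = frobSq (B - X) + frobSq C := fun X hX => by
    rw [hB, hC]
    exact frobSq_sub_of_transpose_eq A (isHermitian_iff_isSymm.mp hX.isHermitian).eq
  have hproj : ∀ X : Matrix (Fin n) (Fin n) ℝ, X.PosSemidef →
      frobSq (A - X_F) + frobSq (X_F - X) ≤ frobSq (A - X) := fun X hX => by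
    rw [hsplit X hX, hsplit X_F hXFpsd, hXFQ]
    linarith [frobSq_sub_posPart_add_le hQ hBQ hX]
  refine ⟨hXFpsd, fun X hX => ?_, fun X hX hnorm => ?_, ?_⟩
  · rw [frobNorm_le_frobNorm_iff]
    linarith [hproj X hX, frobSq_nonneg (X_F - X)]
  · rw [frobNorm_eq_frobNorm_iff] at hnorm
    have h0 : frobSq (X_F - X) = 0 := le_antisymm (by linarith [hproj X hX]) (frobSq_nonneg _)
    exact (sub_eq_zero.mp (frobSq_eq_zero_iff.mp h0)).symm
  · rw [hsplit X_F hXFpsd, hXFQ, hBQ, ← Matrix.sub_mul, ← Matrix.mul_sub,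
      frobSq_mul_mul_transpose hQ, frobSq_diagonal_sub_diagonal_posPart]
    simp only [Real.negPart_sq_eq_ite]
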